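/- (Error bound with partial participation and federated policy evaluation.) With selected client set C and normalized weights q'_m, suppose all selected clients improve their policies against the common value estimate V̄^t (with ‖V̄^t‖_∞ ≤ R_max/(1−γ)): ‖T^{π^{t+1}_m}_m V̄^t − T_m V̄^t‖_∞ ≤ ε_m, and π^{t+1} = ∑_{m∈C} q'_m π^{t+1}_m. Then ‖T^{π^{t+1}}_I V̄^t − T_I V̄^t‖_∞ ≤ ∑_{m∈C} ∑_{n=1}^N q'_m q_n γ R_max κ_{m,n}/(1−γ) + ∑_{m∈C} q'_m γ R_max κ_{m,I}/(1−γ) + ∑_{m∈C} q'_m ε_m. -/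

import Mathlib

/-! The policy Bellman operator is affine in the policy and the normalized weights sum to one,
so `T^π_I V̄ - T_I V̄` is the `q'`-average of the client gaps `T^{π_m}_I V̄ - T_I V̄`. Each gap
is routed through client `m`'s own model: `T^{π_m}_I V̄ - T^{π_m}_m V̄` compares the expectations
of `V̄` under the induced kernels `P̄^{π_m}` and `P_m^{π_m}`, hence is at most `γ ‖V̄‖ κ_{m,I}`;
`T^{π_m}_m V̄ - T_m V̄` is at most `ε_m`; and since both optimality operators are maxima over
actions of one-step lookaheads, `T_m V̄ - T_I V̄` is controlled action by action (through
deterministic policies) by `γ ∑_n q_n ‖V̄‖ κ_{m,n}`, `P̄` being the `q`-mixture of the `P_n`. -/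

open Finset Filter

variable {S A : Type*}

/-- A stochastic policy: for each state, a probability distribution over actions. -/
def IsPolicy [Fintype A] (pi : S → A → ℝ) : Prop :=
  (∀ s a, 0 ≤ pi s a) ∧ ∀ s, ∑ a, pi s a = 1

/-- A transition kernel: for each state-action pair, a probability distribution over states. -/
def IsKernel [Fintype S] (P : S → A → S → ℝ) : Prop :=
  (∀ s a s', 0 ≤ P s a s') ∧ ∀ s a, ∑ s', P s a s' = 1

/-- The policy Bellman operator `T^π` for kernel `P`. -/
def Tpol [Fintype S] [Fintype A] (γ : ℝ) (R : S → A → ℝ) (P : S → A → S → ℝ)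
    (pi : S → A → ℝ) (V : S → ℝ) (s : S) : ℝ :=
  ∑ a, pi s a * (R s a + γ * ∑ s', P s a s' * V s')

/-- The Bellman optimality operator `T` for kernel `P`. -/
noncomputable def Topt [Fintype S] [Fintype A] [Nonempty A] (γ : ℝ) (R : S → A → ℝ)
    (P : S → A → S → ℝ) (V : S → ℝ) (s : S) : ℝ :=
  Finset.univ.sup' Finset.univ_nonempty fun a => R s a + γ * ∑ s', P s a s' * V s'

/-- Heterogeneity measure `κ_{m,n}`: the supremum over policies `π` and states `s` of the
ℓ¹-distance between the induced state transition kernels `P_m^π(·|s)` and `P_n^π(·|s)`. -/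
noncomputable def kappa [Fintype S] [Fintype A] (Pm Pn : S → A → S → ℝ) : ℝ :=
  sSup {x : ℝ | ∃ pi : S → A → ℝ, ∃ s : S, IsPolicy pi ∧
    x = ∑ s', |(∑ a, pi s a * Pm s a s') - ∑ a, pi s a * Pn s a s'|}

/-- Sup-norm of a value function on a finite state space. -/
noncomputable def supNorm [Fintype S] [Nonempty S] (V : S → ℝ) : ℝ := ⨆ s, |V s|

def inducedKernel [Fintype A] (P : S → A → S → ℝ) (pi : S → A → ℝ) (s s' : S) : ℝ :=
  ∑ a, pi s a * P s a s'

section SupNorm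

variable [Fintype S] [Nonempty S]

lemma abs_le_supNorm (V : S → ℝ) (s : S) : |V s| ≤ supNorm V :=
  le_ciSup (Set.finite_range fun s => |V s|).bddAbove s

lemma supNorm_le {V : S → ℝ} {c : ℝ} (h : ∀ s, |V s| ≤ c) : supNorm V ≤ c :=
  ciSup_le h

end SupNorm

lemma Finset.abs_sup'_sub_sup'_le {ι : Type*} {t : Finset ι} (ht : t.Nonempty)
    {f g : ι → ℝ} {c : ℝ} (h : ∀ i ∈ t, |f i - g i| ≤ c) :
    |t.sup' ht f - t.sup' ht g| ≤ c := by
  rw [abs_sub_le_iff, sub_le_iff_le_add, sub_le_iff_le_add]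
  constructor
  · refine Finset.sup'_le ht f fun i hi => ?_
    linarith [(abs_le.mp (h i hi)).2, Finset.le_sup' g hi]
  · refine Finset.sup'_le ht g fun i hi => ?_
    linarith [(abs_le.mp (h i hi)).1, Finset.le_sup' f hi]

lemma abs_sum_mul_le_sum_mul {ι : Type*} {t : Finset ι} {w f b : ι → ℝ}
    (hw : ∀ i ∈ t, 0 ≤ w i) (h : ∀ i ∈ t, |f i| ≤ b i) :
    |∑ i ∈ t, w i * f i| ≤ ∑ i ∈ t, w i * b i := by
  refine (abs_sum_le_sum_abs _ _).trans (Finset.sum_le_sum fun i hi => ?_)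
  rw [abs_mul, abs_of_nonneg (hw i hi)]
  exact mul_le_mul_of_nonneg_left (h i hi) (hw i hi)

lemma IsPolicy.le_one [Fintype A] {pi : S → A → ℝ} (hpi : IsPolicy pi) (s : S) (a : A) :
    pi s a ≤ 1 :=
  hpi.2 s ▸ Finset.single_le_sum (fun a _ => hpi.1 s a) (Finset.mem_univ a)

lemma isPolicy_deterministic [Fintype A] [DecidableEq A] (a : A) :
    IsPolicy (fun (_ : S) (a' : A) => if a' = a then (1 : ℝ) else 0) :=
  ⟨fun _ _ => by dsimp only; split_ifs <;> norm_num, fun _ => by simp⟩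

section Kappa

variable [Fintype S] [Fintype A]

lemma bddAbove_kappa_set (Pm Pn : S → A → S → ℝ) :
    BddAbove {x : ℝ | ∃ pi : S → A → ℝ, ∃ s : S, IsPolicy pi ∧
      x = ∑ s', |(∑ a, pi s a * Pm s a s') - ∑ a, pi s a * Pn s a s'|} := by
  refine ⟨∑ s, ∑ s', ∑ a, |Pm s a s' - Pn s a s'|, ?_⟩
  rintro x ⟨pi, s, hpi, rfl⟩
  have hterm : ∀ s', |(∑ a, pi s a * Pm s a s') - ∑ a, pi s a * Pn s a s'|
      ≤ ∑ a, |Pm s a s' - Pn s a s'| := fun s' => by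
    rw [← Finset.sum_sub_distrib]
    refine (abs_sum_le_sum_abs _ _).trans (Finset.sum_le_sum fun a _ => ?_)
    rw [← mul_sub, abs_mul, abs_of_nonneg (hpi.1 s a)]
    exact mul_le_of_le_one_left (abs_nonneg _) (hpi.le_one s a)
  calc _ ≤ ∑ s', ∑ a, |Pm s a s' - Pn s a s'| := Finset.sum_le_sum fun s' _ => hterm s'
    _ ≤ _ := Finset.single_le_sum (f := fun s => ∑ s', ∑ a, |Pm s a s' - Pn s a s'|)
        (fun _ _ => Finset.sum_nonneg fun _ _ => Finset.sum_nonneg fun _ _ => abs_nonneg _)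
        (Finset.mem_univ s)

lemma sum_abs_inducedKernel_sub_le_kappa (Pm Pn : S → A → S → ℝ) {pi : S → A → ℝ}
    (hpi : IsPolicy pi) (s : S) :
    ∑ s', |inducedKernel Pm pi s s' - inducedKernel Pn pi s s'| ≤ kappa Pm Pn :=
  le_csSup (bddAbove_kappa_set Pm Pn) ⟨pi, s, hpi, rfl⟩

lemma abs_sum_inducedKernel_mul_sub_le_kappa [Nonempty S] (Pm Pn : S → A → S → ℝ)
    {pi : S → A → ℝ} (hpi : IsPolicy pi) {V : S → ℝ} {c : ℝ} (hV : ∀ s', |V s'| ≤ c) (s : S) :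
    |∑ s', inducedKernel Pm pi s s' * V s' - ∑ s', inducedKernel Pn pi s s' * V s'|
      ≤ c * kappa Pm Pn := by
  have hc : 0 ≤ c := (abs_nonneg _).trans (hV (Classical.arbitrary S))
  calc _ = |∑ s', (inducedKernel Pm pi s s' - inducedKernel Pn pi s s') * V s'| := by
        rw [← Finset.sum_sub_distrib]; simp only [sub_mul]
    _ ≤ ∑ s', |inducedKernel Pm pi s s' - inducedKernel Pn pi s s'| * c := by
        refine (abs_sum_le_sum_abs _ _).trans (Finset.sum_le_sum fun s' _ => ?_)
        rw [abs_mul]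
        exact mul_le_mul_of_nonneg_left (hV s') (abs_nonneg _)
    _ ≤ c * kappa Pm Pn := by
        rw [← Finset.sum_mul, mul_comm]
        exact mul_le_mul_of_nonneg_left (sum_abs_inducedKernel_sub_le_kappa Pm Pn hpi s) hc

lemma abs_sum_kernel_mul_sub_le_kappa [Nonempty S] (Pm Pn : S → A → S → ℝ) {V : S → ℝ} {c : ℝ}
    (hV : ∀ s', |V s'| ≤ c) (s : S) (a : A) :
    |∑ s', Pm s a s' * V s' - ∑ s', Pn s a s' * V s'| ≤ c * kappa Pm Pn := by
  classical
  simpa [inducedKernel, ite_mul] using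
    abs_sum_inducedKernel_mul_sub_le_kappa Pm Pn (isPolicy_deterministic (S := S) a) hV s

end Kappa

section Bellman

variable [Fintype S] [Fintype A] {γ : ℝ} (R : S → A → ℝ)

lemma Tpol_eq (P : S → A → S → ℝ) (pi : S → A → ℝ) (V : S → ℝ) (s : S) :
    Tpol γ R P pi V s = ∑ a, pi s a * R s a + γ * ∑ s', inducedKernel P pi s s' * V s' := by
  simp only [Tpol, inducedKernel, mul_add, Finset.sum_add_distrib, Finset.mul_sum,
    Finset.sum_mul]
  rw [Finset.sum_comm (f := fun s' a => γ * (pi s a * P s a s' * V s'))]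
  congr 1
  exact Finset.sum_congr rfl fun a _ => Finset.sum_congr rfl fun s' _ => by ring

lemma Tpol_eq_sum_of_policy_eq_sum {ι : Type*} {C : Finset ι} {w : ι → ℝ} {pis : ι → S → A → ℝ}
    {pi : S → A → ℝ} (P : S → A → S → ℝ) (V : S → ℝ) (s : S)
    (hpi : ∀ a, pi s a = ∑ m ∈ C, w m * pis m s a) :
    Tpol γ R P pi V s = ∑ m ∈ C, w m * Tpol γ R P (pis m) V s := by
  simp only [Tpol, hpi, Finset.sum_mul, Finset.mul_sum, mul_assoc]
  exact Finset.sum_comm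

lemma abs_Tpol_sub_Tpol_le [Nonempty S] (hγ : 0 ≤ γ) (Pm Pn : S → A → S → ℝ)
    {pi : S → A → ℝ} (hpi : IsPolicy pi) {V : S → ℝ} {c : ℝ} (hV : ∀ s', |V s'| ≤ c) (s : S) :
    |Tpol γ R Pm pi V s - Tpol γ R Pn pi V s| ≤ γ * (c * kappa Pm Pn) := by
  rw [Tpol_eq, Tpol_eq, add_sub_add_left_eq_sub, ← mul_sub, abs_mul, abs_of_nonneg hγ]
  exact mul_le_mul_of_nonneg_left (abs_sum_inducedKernel_mul_sub_le_kappa Pm Pn hpi hV s) hγ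

lemma abs_Topt_sub_Topt_le [Nonempty A] (hγ : 0 ≤ γ) {P P' : S → A → S → ℝ} {V : S → ℝ}
    {d : ℝ} (s : S) (h : ∀ a, |∑ s', P s a s' * V s' - ∑ s', P' s a s' * V s'| ≤ d) :
    |Topt γ R P V s - Topt γ R P' V s| ≤ γ * d :=
  Finset.abs_sup'_sub_sup'_le _ fun a _ => by
    rw [add_sub_add_left_eq_sub, ← mul_sub, abs_mul, abs_of_nonneg hγ]
    exact mul_le_mul_of_nonneg_left (h a) hγ

end Bellman

section Mixture

variable [Fintype S] [Fintype A] [Nonempty S] {ι : Type*} [Fintype ι] {q : ι → ℝ}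
  {P : ι → S → A → S → ℝ} {Pbar : S → A → S → ℝ}

lemma abs_sum_kernel_mul_sub_mixture_le (hq0 : ∀ n, 0 ≤ q n) (hq1 : ∑ n, q n = 1)
    (hPbar : ∀ s a s', Pbar s a s' = ∑ n, q n * P n s a s') (Pm : S → A → S → ℝ)
    {V : S → ℝ} {c : ℝ} (hV : ∀ s', |V s'| ≤ c) (s : S) (a : A) :
    |∑ s', Pm s a s' * V s' - ∑ s', Pbar s a s' * V s'|
      ≤ ∑ n, q n * (c * kappa Pm (P n)) := by
  have hbar : ∑ s', Pbar s a s' * V s' = ∑ n, q n * ∑ s', P n s a s' * V s' := by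
    simp only [hPbar, Finset.sum_mul, Finset.mul_sum, mul_assoc]
    exact Finset.sum_comm
  have hmix : ∑ s', Pm s a s' * V s' - ∑ s', Pbar s a s' * V s'
      = ∑ n, q n * (∑ s', Pm s a s' * V s' - ∑ s', P n s a s' * V s') := by
    simp only [hbar, mul_sub, Finset.sum_sub_distrib, ← Finset.sum_mul, hq1, one_mul]
  rw [hmix]
  exact abs_sum_mul_le_sum_mul (fun n _ => hq0 n) fun n _ =>
    abs_sum_kernel_mul_sub_le_kappa Pm (P n) hV s a

lemma abs_Tpol_sub_Topt_mixture_le [Nonempty A] {γ : ℝ} (hγ : 0 ≤ γ) (R : S → A → ℝ)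
    (hq0 : ∀ n, 0 ≤ q n) (hq1 : ∑ n, q n = 1)
    (hPbar : ∀ s a s', Pbar s a s' = ∑ n, q n * P n s a s') (Pm : S → A → S → ℝ)
    {pi : S → A → ℝ} (hpi : IsPolicy pi) {V : S → ℝ} {c : ℝ} (hV : ∀ s', |V s'| ≤ c) (s : S) :
    |Tpol γ R Pbar pi V s - Topt γ R Pbar V s|
      ≤ γ * ∑ n, q n * (c * kappa Pm (P n)) + γ * (c * kappa Pm Pbar)
        + |Tpol γ R Pm pi V s - Topt γ R Pm V s| := by
  have hmodel := abs_Tpol_sub_Tpol_le R hγ Pm Pbar hpi hV s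
  rw [abs_sub_comm] at hmodel
  have hopt := abs_Topt_sub_Topt_le R hγ s (abs_sum_kernel_mul_sub_mixture_le hq0 hq1 hPbar Pm hV s)
  linarith [abs_sub_le (Tpol γ R Pbar pi V s) (Tpol γ R Pm pi V s) (Topt γ R Pbar V s),
    abs_sub_le (Tpol γ R Pm pi V s) (Topt γ R Pm V s) (Topt γ R Pbar V s)]

end Mixture

variable [Fintype S] [Fintype A] [Nonempty S] [Nonempty A]

theorem stmt11_general (N : ℕ) (γ Rmax : ℝ) (hγ0 : 0 < γ)
    (R : S → A → ℝ)
    (q : Fin N → ℝ) (hq0 : ∀ n, 0 ≤ q n) (hq1 : ∑ n, q n = 1)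
    (P : Fin N → S → A → S → ℝ)
    (Pbar : S → A → S → ℝ) (hPbar : ∀ s a s', Pbar s a s' = ∑ j, q j * P j s a s')
    (C : Finset (Fin N)) (hC : 0 < ∑ m ∈ C, q m)
    (Vbar : S → ℝ) (hVbar : supNorm Vbar ≤ Rmax / (1 - γ))
    (pinext : Fin N → S → A → ℝ) (hpinext : ∀ n, IsPolicy (pinext n))
    (ε : Fin N → ℝ)
    (hε : ∀ m ∈ C, supNorm (fun s => Tpol γ R (P m) (pinext m) Vbar s - Topt γ R (P m) Vbar s) ≤ ε m)
    (piagg : S → A → ℝ)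
    (hpiagg : ∀ s a, piagg s a = ∑ m ∈ C, (q m / ∑ k ∈ C, q k) * pinext m s a) :
    supNorm (fun s => Tpol γ R Pbar piagg Vbar s - Topt γ R Pbar Vbar s) ≤
      (∑ m ∈ C, ∑ n, (q m / ∑ k ∈ C, q k) * q n * (γ * Rmax * kappa (P m) (P n) / (1 - γ))) +
        (∑ m ∈ C, (q m / ∑ k ∈ C, q k) * (γ * Rmax * kappa (P m) Pbar / (1 - γ))) +
        ∑ m ∈ C, (q m / ∑ k ∈ C, q k) * ε m := by
  set w : Fin N → ℝ := fun m => q m / ∑ k ∈ C, q k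
  have hw0 : ∀ m ∈ C, 0 ≤ w m := fun m _ => div_nonneg (hq0 m) hC.le
  have hw1 : ∑ m ∈ C, w m = 1 := by rw [← Finset.sum_div, div_self hC.ne']
  have hV : ∀ s', |Vbar s'| ≤ Rmax / (1 - γ) := fun s' => (abs_le_supNorm Vbar s').trans hVbar
  refine supNorm_le fun s => ?_
  have hsplit : Tpol γ R Pbar piagg Vbar s - Topt γ R Pbar Vbar s
      = ∑ m ∈ C, w m * (Tpol γ R Pbar (pinext m) Vbar s - Topt γ R Pbar Vbar s) := by
    simp only [mul_sub, Finset.sum_sub_distrib, ← Finset.sum_mul, hw1, one_mul]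
    rw [Tpol_eq_sum_of_policy_eq_sum R Pbar Vbar s (hpiagg s)]
  have hclient : ∀ m ∈ C, |Tpol γ R Pbar (pinext m) Vbar s - Topt γ R Pbar Vbar s|
      ≤ γ * ∑ n, q n * (Rmax / (1 - γ) * kappa (P m) (P n))
        + γ * (Rmax / (1 - γ) * kappa (P m) Pbar) + ε m := fun m hm =>
    (abs_Tpol_sub_Topt_mixture_le hγ0.le R hq0 hq1 hPbar (P m) (hpinext m) hV s).trans
      (add_le_add_right ((abs_le_supNorm _ s).trans (hε m hm)) _)
  rw [hsplit]
  refine (abs_sum_mul_le_sum_mul hw0 hclient).trans (le_of_eq ?_)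
  simp only [mul_add, Finset.sum_add_distrib, Finset.mul_sum]
  congr 2 <;> refine Finset.sum_congr rfl fun m _ => ?_
  · exact Finset.sum_congr rfl fun n _ => by ring
  · ring

theorem stmt11 (N : ℕ) (γ Rmax : ℝ) (hγ0 : 0 < γ) (hγ1 : γ < 1)
    (R : S → A → ℝ) (hR : ∀ s a, 0 ≤ R s a ∧ R s a ≤ Rmax)
    (q : Fin N → ℝ) (hq0 : ∀ n, 0 ≤ q n) (hq1 : ∑ n, q n = 1)
    (P : Fin N → S → A → S → ℝ) (hP : ∀ n, IsKernel (P n))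
    (Pbar : S → A → S → ℝ) (hPbar : ∀ s a s', Pbar s a s' = ∑ j, q j * P j s a s')
    (C : Finset (Fin N)) (hC : 0 < ∑ m ∈ C, q m)
    (Vbar : S → ℝ) (hVbar : supNorm Vbar ≤ Rmax / (1 - γ))
    (pinext : Fin N → S → A → ℝ) (hpinext : ∀ n, IsPolicy (pinext n))
    (ε : Fin N → ℝ)
    (hε : ∀ m ∈ C, supNorm (fun s => Tpol γ R (P m) (pinext m) Vbar s - Topt γ R (P m) Vbar s) ≤ ε m)
    (piagg : S → A → ℝ)
    (hpiagg : ∀ s a, piagg s a = ∑ m ∈ C, (q m / ∑ k ∈ C, q k) * pinext m s a) :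
    supNorm (fun s => Tpol γ R Pbar piagg Vbar s - Topt γ R Pbar Vbar s) ≤
      (∑ m ∈ C, ∑ n, (q m / ∑ k ∈ C, q k) * q n * (γ * Rmax * kappa (P m) (P n) / (1 - γ))) +
        (∑ m ∈ C, (q m / ∑ k ∈ C, q k) * (γ * Rmax * kappa (P m) Pbar / (1 - γ))) +
        ∑ m ∈ C, (q m / ∑ k ∈ C, q k) * ε m :=
  stmt11_general N γ Rmax hγ0 R q hq0 hq1 P Pbar hPbar C hC Vbar hVbar pinext hpinext ε hε piagg
    hpiagg
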